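/- arXiv:math/0003067 — 3 statements merged into one kernel-verified Lean document; each statement's English description precedes it below -/
import Mathlib

section
/- Let B be an invertible real n×n matrix and E ⊆ ℝⁿ a measurable set such that the sets B^j(E), j ∈ ℤ, are pairwise disjoint and ℝⁿ \ ⋃_{j∈ℤ} B^j(E) has Lebesgue measure zero. Then the map Φ : L²(ℝⁿ) → L²(E × ℤ) defined by Φf(x,k) = |det B|^{k/2} f(B^k x) is a Hilbert space isomorphism (unitary), where E × ℤ carries the product of Lebesgue measure on E and counting measure on ℤ. -/
/-!
The map `T (x, k) = B^k x` sends `E × ℤ` bijectively onto the conull set `⋃ₖ Bᵏ(E)`, with an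
inverse that is measurable piecewise on the tiles, and by the change of variables formula it
carries the measure
`|det B|^k dx ⊗ count` on `E × ℤ` to Lebesgue measure. Hence `f ↦ f ∘ T` is a unitary
`L²(ℝⁿ) ≅ L²(E × ℤ, |det B|^k dx ⊗ count)`, and multiplying by the square root
`|det B|^{k/2}` of the density is a unitary onto `L²(E × ℤ)`.
-/

open MeasureTheory Complex Matrix Set
open scoped ENNReal

namespace MeasureTheory

section WeightedLp

variable {α 𝕜 F : Type*} [MeasurableSpace α] [RCLike 𝕜] [NormedAddCommGroup F]
  [NormedSpace 𝕜 F] {ν : Measure α} {w : α → 𝕜} {p : ℝ≥0∞}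

theorem eLpNorm_withDensity_enorm_rpow (hp0 : p ≠ 0) (hp : p ≠ ∞) (hw : Measurable w)
    (f : α → F) :
    eLpNorm f p (ν.withDensity fun a => ‖w a‖ₑ ^ p.toReal) =
      eLpNorm (fun a => w a • f a) p ν := by
  simp only [eLpNorm_eq_lintegral_rpow_enorm_toReal hp0 hp, enorm_smul,
    ENNReal.mul_rpow_of_nonneg _ _ ENNReal.toReal_nonneg]
  rw [lintegral_withDensity_eq_lintegral_mul_non_measurable _ (hw.enorm.pow_const _)
    (.of_forall fun a => ENNReal.rpow_lt_top_of_nonneg ENNReal.toReal_nonneg enorm_ne_top)]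
  rfl

theorem absolutelyContinuous_withDensity_enorm_rpow (hw : Measurable w) (hw0 : ∀ a, w a ≠ 0) :
    ν ≪ ν.withDensity fun a => ‖w a‖ₑ ^ p.toReal :=
  withDensity_absolutelyContinuous' (hw.enorm.pow_const _).aemeasurable
    (.of_forall fun a => by simp [hw0 a])

theorem memLp_withDensity_enorm_rpow_iff (hp0 : p ≠ 0) (hp : p ≠ ∞) (hw : Measurable w)
    (hw0 : ∀ a, w a ≠ 0) {f : α → F} :
    MemLp f p (ν.withDensity fun a => ‖w a‖ₑ ^ p.toReal) ↔
      MemLp (fun a => w a • f a) p ν := by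
  have hac := absolutelyContinuous_withDensity_enorm_rpow (ν := ν) (p := p) hw hw0
  have hf : f = fun a => (w a)⁻¹ • w a • f a := by
    funext a; rw [inv_smul_smul₀ (hw0 a)]
  simp only [MemLp, eLpNorm_withDensity_enorm_rpow hp0 hp hw]
  refine and_congr_left fun _ => ⟨fun h => hw.aestronglyMeasurable.smul (h.mono_ac hac),
    fun h => ?_⟩
  rw [hf]
  exact (hw.inv.aestronglyMeasurable.smul h).mono_ac (withDensity_absolutelyContinuous _ _)

namespace Lp

variable [Fact (1 ≤ p)] (hp : p ≠ ∞) (hw : Measurable w) (hw0 : ∀ a, w a ≠ 0)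
include hp hw hw0

theorem memLp_smul_of_withDensity (f : Lp F p (ν.withDensity fun a => ‖w a‖ₑ ^ p.toReal)) :
    MemLp (fun a => w a • f a) p ν :=
  (memLp_withDensity_enorm_rpow_iff (one_pos.trans_le Fact.out).ne' hp hw hw0).1 (Lp.memLp f)

noncomputable def weightSMulₗᵢ :
    Lp F p (ν.withDensity fun a => ‖w a‖ₑ ^ p.toReal) →ₗᵢ[𝕜] Lp F p ν where
  toFun f := (memLp_smul_of_withDensity hp hw hw0 f).toLp _
  map_add' f g := by
    rw [← MemLp.toLp_add]
    refine MemLp.toLp_congr _ _ ?_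
    filter_upwards [(absolutelyContinuous_withDensity_enorm_rpow hw hw0).ae_le
      (Lp.coeFn_add f g)] with a ha
    rw [ha, Pi.add_apply, smul_add]
    rfl
  map_smul' c f := by
    rw [RingHom.id_apply, ← MemLp.toLp_const_smul]
    refine MemLp.toLp_congr _ _ ?_
    filter_upwards [(absolutelyContinuous_withDensity_enorm_rpow hw hw0).ae_le
      (Lp.coeFn_smul c f)] with a ha
    rw [ha, Pi.smul_apply, Pi.smul_apply, smul_comm]
  norm_map' f := by
    rw [LinearMap.coe_mk, AddHom.coe_mk, Lp.norm_toLp, ← eLpNorm_withDensity_enorm_rpow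
      (one_pos.trans_le Fact.out).ne' hp hw, Lp.norm_def]

theorem coeFn_weightSMulₗᵢ (f : Lp F p (ν.withDensity fun a => ‖w a‖ₑ ^ p.toReal)) :
    weightSMulₗᵢ hp hw hw0 f =ᵐ[ν] fun a => w a • f a :=
  MemLp.coeFn_toLp (memLp_smul_of_withDensity hp hw hw0 f)

theorem weightSMulₗᵢ_surjective :
    Function.Surjective (weightSMulₗᵢ (F := F) (ν := ν) hp hw hw0) := by
  intro g
  have hg : MemLp (fun a => w a • (w a)⁻¹ • g a) p ν := by
    simpa only [smul_inv_smul₀ (hw0 _)] using Lp.memLp g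
  have hf := (memLp_withDensity_enorm_rpow_iff (one_pos.trans_le Fact.out).ne' hp hw hw0).2 hg
  refine ⟨hf.toLp _, Lp.ext ?_⟩
  filter_upwards [coeFn_weightSMulₗᵢ hp hw hw0 (hf.toLp _),
    (absolutelyContinuous_withDensity_enorm_rpow hw hw0).ae_le hf.coeFn_toLp] with a h₁ h₂
  rw [h₁, h₂, smul_inv_smul₀ (hw0 a)]

end Lp

variable {β : Type*} [MeasurableSpace β] {μ : Measure β}

theorem Lp.compMeasurePreserving_surjective {T : α → β} (hT : MeasurePreserving T ν μ)
    {S : β → α} (hS : Measurable S) (hST : ∀ᵐ a ∂ν, S (T a) = a) :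
    Function.Surjective (Lp.compMeasurePreserving T hT : Lp F p μ → Lp F p ν) := by
  have hS' : MeasurePreserving S μ ν := ⟨hS, by
    rw [← hT.map_eq, Measure.map_map hS hT.measurable,
      Measure.map_congr (f := S ∘ T) (g := id) hST, Measure.map_id]⟩
  intro g
  refine ⟨Lp.compMeasurePreserving S hS' g, ?_⟩
  rw [← Lp.compMeasurePreserving_comp_apply]
  ext1
  filter_upwards [Lp.coeFn_compMeasurePreserving g (hS'.comp hT), hST] with a h₁ h₂
  rw [h₁, Function.comp_apply, Function.comp_apply, h₂]

theorem exists_linearIsometryEquiv_weightSMul_comp [Fact (1 ≤ p)] (hp : p ≠ ∞) {T : α → β}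
    (hT : Measurable T) (hw : Measurable w) (hw0 : ∀ a, w a ≠ 0)
    (hmap : (ν.withDensity fun a => ‖w a‖ₑ ^ p.toReal).map T = μ) {S : β → α}
    (hS : Measurable S) (hST : ∀ᵐ a ∂ν, S (T a) = a) :
    ∃ Φ : Lp F p μ ≃ₗᵢ[𝕜] Lp F p ν, ∀ f, Φ f =ᵐ[ν] fun a => w a • f (T a) := by
  have hT' : MeasurePreserving T (ν.withDensity fun a => ‖w a‖ₑ ^ p.toReal) μ := ⟨hT, hmap⟩
  have hsurj := Lp.compMeasurePreserving_surjective (F := F) (p := p) hT' hS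
    ((withDensity_absolutelyContinuous _ _).ae_le hST)
  refine ⟨(LinearIsometryEquiv.ofSurjective (Lp.compMeasurePreservingₗᵢ 𝕜 T hT') hsurj).trans
    (.ofSurjective _ (Lp.weightSMulₗᵢ_surjective hp hw hw0)), fun f => ?_⟩
  filter_upwards [Lp.coeFn_weightSMulₗᵢ hp hw hw0 (Lp.compMeasurePreserving T hT' f),
    (absolutelyContinuous_withDensity_enorm_rpow hw hw0).ae_le
      (Lp.coeFn_compMeasurePreserving f hT')] with a h₁ h₂
  exact h₁.trans (congrArg (w a • ·) h₂)

end WeightedLp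

end MeasureTheory

theorem Matrix.det_zpow {ι K : Type*} [Fintype ι] [DecidableEq ι] [Field K] (A : Matrix ι ι K)
    (k : ℤ) : (A ^ k).det = A.det ^ k := by
  rcases k with m | m
  · simp only [Int.ofNat_eq_natCast, zpow_natCast, det_pow]
  · rw [zpow_negSucc, det_nonsing_inv, Ring.inverse_eq_inv, det_pow, zpow_negSucc]

section Tiling

variable {ι : Type*} [Fintype ι] [DecidableEq ι] {B : Matrix ι ι ℝ} {E : Set (ι → ℝ)}

theorem lintegral_image_mulVec {M : Matrix ι ι ℝ} (hM : M.det ≠ 0) {s : Set (ι → ℝ)}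
    (hs : MeasurableSet s) (g : (ι → ℝ) → ℝ≥0∞) :
    ∫⁻ y in (M *ᵥ ·) '' s, g y = ∫⁻ x in s, ENNReal.ofReal |M.det| * g (M *ᵥ x) := by
  have hinj : Function.Injective (M *ᵥ ·) :=
    mulVec_injective_iff_isUnit.2 ((isUnit_iff_isUnit_det M).2 hM.isUnit)
  have hM' : ⇑(Matrix.toLin' M).toContinuousLinearMap = (M *ᵥ ·) := rfl
  rw [← hM', lintegral_image_eq_lintegral_abs_det_fderiv_mul volume hs
    (fun x _ => (Matrix.toLin' M).toContinuousLinearMap.hasFDerivWithinAt) hinj.injOn]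
  simp only [LinearMap.det_toContinuousLinearMap, LinearMap.det_toLin',
    LinearMap.coe_toContinuousLinearMap', Matrix.toLin'_apply]

theorem mulVec_zpow_injective (hB : B.det ≠ 0) (k : ℤ) : Function.Injective (B ^ k *ᵥ ·) :=
  mulVec_injective_iff_isUnit.2 <| (isUnit_iff_isUnit_det _).2 (hB.isUnit.det_zpow k)

theorem MeasurableSet.image_mulVec_zpow (hB : B.det ≠ 0) (hE : MeasurableSet E) (k : ℤ) :
    MeasurableSet ((B ^ k *ᵥ ·) '' E) :=
  hE.image_of_continuousOn_injOn (by fun_prop) (mulVec_zpow_injective hB k).injOn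

theorem measurable_mulVec_zpow_prod : Measurable fun p : (ι → ℝ) × ℤ => B ^ p.2 *ᵥ p.1 :=
  measurable_from_prod_countable_left fun k => by dsimp only; fun_prop

theorem lintegral_prod_count_mulVec_zpow (hB : B.det ≠ 0) (hE : MeasurableSet E)
    (hdisj : Pairwise fun j k : ℤ => Disjoint ((B ^ j *ᵥ ·) '' E) ((B ^ k *ᵥ ·) '' E))
    (hcover : volume ((⋃ j : ℤ, (B ^ j *ᵥ ·) '' E)ᶜ) = 0) {g : (ι → ℝ) → ℝ≥0∞}
    (hg : Measurable g) :
    ∫⁻ p, ENNReal.ofReal (|B.det| ^ p.2) * g (B ^ p.2 *ᵥ p.1)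
        ∂((volume.restrict E).prod (Measure.count : Measure ℤ)) = ∫⁻ y, g y := by
  have hmeas : Measurable fun p : (ι → ℝ) × ℤ =>
      ENNReal.ofReal (|B.det| ^ p.2) * g (B ^ p.2 *ᵥ p.1) :=
    measurable_from_prod_countable_left fun k => by dsimp only; fun_prop
  calc _ = ∑' k : ℤ, ∫⁻ x in E, ENNReal.ofReal |(B ^ k).det| * g (B ^ k *ᵥ x) := by
        rw [lintegral_prod_symm' _ hmeas, lintegral_count]
        simp only [det_zpow, abs_zpow]
    _ = ∑' k : ℤ, ∫⁻ y in (B ^ k *ᵥ ·) '' E, g y := by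
        simp only [lintegral_image_mulVec (det_zpow B _ ▸ zpow_ne_zero _ hB) hE]
    _ = ∫⁻ y in ⋃ k : ℤ, (B ^ k *ᵥ ·) '' E, g y :=
        (lintegral_iUnion (fun k => hE.image_mulVec_zpow hB k) hdisj g).symm
    _ = ∫⁻ y, g y := by rw [setLIntegral_congr (ae_eq_univ.2 hcover), setLIntegral_univ]

theorem map_withDensity_prod_count_mulVec_zpow (hB : B.det ≠ 0) (hE : MeasurableSet E)
    (hdisj : Pairwise fun j k : ℤ => Disjoint ((B ^ j *ᵥ ·) '' E) ((B ^ k *ᵥ ·) '' E))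
    (hcover : volume ((⋃ j : ℤ, (B ^ j *ᵥ ·) '' E)ᶜ) = 0) :
    (((volume.restrict E).prod (Measure.count : Measure ℤ)).withDensity
      fun p => ENNReal.ofReal (|B.det| ^ p.2)).map (fun p => B ^ p.2 *ᵥ p.1) = volume := by
  refine Measure.ext_of_lintegral _ fun g hg => ?_
  rw [lintegral_map hg measurable_mulVec_zpow_prod]
  exact (lintegral_withDensity_eq_lintegral_mul _ (by fun_prop)
    (hg.comp measurable_mulVec_zpow_prod)).trans
    (lintegral_prod_count_mulVec_zpow hB hE hdisj hcover hg)

theorem exists_measurable_mulVec_zpow_leftInverse (hB : B.det ≠ 0) (hE : MeasurableSet E)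
    (hdisj : Pairwise fun j k : ℤ => Disjoint ((B ^ j *ᵥ ·) '' E) ((B ^ k *ᵥ ·) '' E)) :
    ∃ S : (ι → ℝ) → (ι → ℝ) × ℤ, Measurable S ∧
      ∀ x ∈ E, ∀ k : ℤ, S (B ^ k *ᵥ x) = (x, k) := by
  obtain ⟨S, hS, hSeq⟩ := exists_measurable_piecewise (fun k : ℤ => (B ^ k *ᵥ ·) '' E)
    (fun k => hE.image_mulVec_zpow hB k) (fun k y => (B ^ (-k) *ᵥ y, k)) (fun k => by fun_prop)
    fun j k hjk => by simp [(hdisj hjk).inter_eq]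
  refine ⟨S, hS, fun x hx k => ?_⟩
  rw [hSeq k (mem_image_of_mem _ hx)]
  dsimp only
  rw [mulVec_mulVec, zpow_neg_mul_zpow_self k (isUnit_iff_ne_zero.2 hB), one_mulVec]

end Tiling

theorem Complex.enorm_ofReal_rpow_div_two_rpow_two {x : ℝ} (hx : 0 ≤ x) (k : ℤ) :
    ‖((x ^ ((k : ℝ) / 2) : ℝ) : ℂ)‖ₑ ^ (2 : ℝ≥0∞).toReal = ENNReal.ofReal (x ^ k) := by
  rw [← ofReal_norm, Complex.norm_real, Real.norm_of_nonneg (Real.rpow_nonneg hx _),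
    ENNReal.ofReal_rpow_of_nonneg (Real.rpow_nonneg hx _) ENNReal.toReal_nonneg,
    ← Real.rpow_mul hx, ENNReal.toReal_ofNat, div_mul_cancel₀ _ two_ne_zero, Real.rpow_intCast]

/-- If `E ⊆ ℝⁿ` tiles `ℝⁿ` under dilation by an invertible matrix `B`
(the sets `B^j(E)`, `j ∈ ℤ`, are pairwise disjoint and cover `ℝⁿ` up to a null set),
then `Φ f (x, k) = |det B|^{k/2} f (B^k x)` defines a Hilbert space isomorphism
(unitary) from `L²(ℝⁿ)` onto `L²(E × ℤ)`, where `E × ℤ` carries the product of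
Lebesgue measure on `E` and counting measure on `ℤ`. -/
theorem tiling_unitary {n : ℕ} (B : Matrix (Fin n) (Fin n) ℝ) (hB : B.det ≠ 0)
    (E : Set (Fin n → ℝ)) (hE : MeasurableSet E)
    (hdisj : Pairwise fun j k : ℤ =>
      Disjoint ((fun x => (B ^ j).mulVec x) '' E) ((fun x => (B ^ k).mulVec x) '' E))
    (hcover : volume ((⋃ j : ℤ, (fun x => (B ^ j).mulVec x) '' E)ᶜ) = 0) :
    ∃ Φ : Lp ℂ 2 (volume : Measure (Fin n → ℝ)) ≃ₗᵢ[ℂ]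
        Lp ℂ 2 (((volume : Measure (Fin n → ℝ)).restrict E).prod
          (Measure.count : Measure ℤ)),
      ∀ f : Lp ℂ 2 (volume : Measure (Fin n → ℝ)),
        (Φ f : (Fin n → ℝ) × ℤ → ℂ) =ᵐ[((volume : Measure (Fin n → ℝ)).restrict E).prod
            (Measure.count : Measure ℤ)]
          fun p => ((|B.det| ^ ((p.2 : ℝ) / 2) : ℝ) : ℂ) * f ((B ^ p.2).mulVec p.1) := by
  obtain ⟨S, hS, hST⟩ := exists_measurable_mulVec_zpow_leftInverse hB hE hdisj
  refine exists_linearIsometryEquiv_weightSMul_comp (𝕜 := ℂ) (F := ℂ) (p := 2) (μ := volume)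
    (ν := (volume.restrict E).prod (Measure.count : Measure ℤ)) (T := fun p => B ^ p.2 *ᵥ p.1)
    (w := fun p => ((|B.det| ^ ((p.2 : ℝ) / 2) : ℝ) : ℂ)) ENNReal.ofNat_ne_top
    measurable_mulVec_zpow_prod (by fun_prop)
    (fun p => ofReal_ne_zero.2 (Real.rpow_pos_of_pos (abs_pos.2 hB) _).ne') ?_ hS ?_
  · simpa only [enorm_ofReal_rpow_div_two_rpow_two (abs_nonneg B.det)] using
      map_withDensity_prod_count_mulVec_zpow hB hE hdisj hcover
  · filter_upwards [Measure.quasiMeasurePreserving_fst.ae (ae_restrict_mem hE)] with p hp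
    exact hST p.1 hp p.2
end

section
/- With E a measurable set tiling ℝⁿ under dilation by B = Aᵀ (i.e., the B^j(E), j ∈ ℤ, are pairwise disjoint and cover ℝⁿ up to measure zero) and Φ : L²(ℝⁿ) → L²(E × ℤ) the unitary Φf(x,k) = |det B|^{k/2} f(B^k x), the conjugated dilation operator D̃_A = Φ (ℱ D_A ℱ^{-1}) Φ^{-1} satisfies D̃_A f(x,k) = f(x, k-1) for all f ∈ L²(E × ℤ). -/
open MeasureTheory Complex Matrix

/-!
Write `g = Φ⁻¹ f`, so that `f (x, k) = |det B|^{k/2} g (B^k x)`. Then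
`Φ (D̂ g) (x, k) = |det B|^{k/2} |det B|^{-1/2} g (B^{-1} B^k x)`
`               = |det B|^{(k-1)/2} g (B^{k-1} x) = f (x, k - 1)`.
The almost-everywhere bookkeeping works because the invertible linear map `B^k` pulls null
sets of `ℝⁿ` back to null sets, and a set is null in `E × ℤ` exactly when each of its slices
at a fixed `k` is null in `E`.
-/

theorem ae_prod_count_iff {α β : Type*} [MeasurableSpace α] [MeasurableSpace β]
    [Countable β] [MeasurableSingletonClass β] (μ : Measure α) [SFinite μ]
    {P : α × β → Prop} :
    (∀ᵐ p ∂μ.prod (Measure.count : Measure β), P p) ↔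
      ∀ k, ∀ᵐ x ∂μ, P (x, k) := by
  rw [← Measure.sum_smul_dirac (Measure.count : Measure β), Measure.prod_sum_right,
    Measure.ae_sum_iff]
  simp only [Measure.count_singleton, one_smul, Measure.prod_dirac]
  exact forall_congr' fun k => (measurableEmbedding_prod_mk_right k).ae_map_iff

theorem Matrix.ae_eq_comp_mulVec {ι β : Type*} [Fintype ι] [DecidableEq ι]
    (μ : Measure (ι → ℝ)) [μ.IsAddHaarMeasure] {M : Matrix ι ι ℝ} (hM : M.det ≠ 0)
    {f g : (ι → ℝ) → β} (h : f =ᵐ[μ] g) : f ∘ M.mulVec =ᵐ[μ] g ∘ M.mulVec :=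
  (Measure.LinearMap.quasiMeasurePreserving μ (Matrix.toLin' M)
    (by rwa [LinearMap.det_toLin'])).ae_eq h

theorem Matrix.inv_mul_zpow {ι R : Type*} [Fintype ι] [DecidableEq ι] [CommRing R]
    {B : Matrix ι ι R} (hB : IsUnit B.det) (k : ℤ) : B⁻¹ * B ^ k = B ^ (k - 1) := by
  rw [sub_eq_neg_add, Matrix.zpow_add hB, Matrix.zpow_neg_one]

theorem Real.rpow_div_two_mul_inv_sqrt {a : ℝ} (ha : 0 < a) (s : ℝ) :
    a ^ (s / 2) * (√a)⁻¹ = a ^ ((s - 1) / 2) := by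
  rw [Real.sqrt_eq_rpow, ← Real.rpow_neg ha.le, ← Real.rpow_add ha]
  ring_nf

theorem conjugated_dilation_is_shift_general {n : ℕ} (A : Matrix (Fin n) (Fin n) ℝ)
    (hA : A.det ≠ 0) (E : Set (Fin n → ℝ))
    (Φ : Lp ℂ 2 (volume : Measure (Fin n → ℝ)) ≃ₗᵢ[ℂ]
      Lp ℂ 2 (((volume : Measure (Fin n → ℝ)).restrict E).prod (Measure.count : Measure ℤ)))
    (hΦ : ∀ f : Lp ℂ 2 (volume : Measure (Fin n → ℝ)),
      (Φ f : (Fin n → ℝ) × ℤ → ℂ) =ᵐ[((volume : Measure (Fin n → ℝ)).restrict E).prod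
          (Measure.count : Measure ℤ)]
        fun p => ((|Aᵀ.det| ^ ((p.2 : ℝ) / 2) : ℝ) : ℂ) * f ((Aᵀ ^ p.2).mulVec p.1))
    (Dhat : Lp ℂ 2 (volume : Measure (Fin n → ℝ)) ≃ₗᵢ[ℂ]
      Lp ℂ 2 (volume : Measure (Fin n → ℝ)))
    (hDhat : ∀ f : Lp ℂ 2 (volume : Measure (Fin n → ℝ)),
      (Dhat f : (Fin n → ℝ) → ℂ) =ᵐ[volume]
        fun ξ => ((Real.sqrt |Aᵀ.det| : ℂ))⁻¹ * f ((Aᵀ)⁻¹.mulVec ξ)) :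
    ∀ f : Lp ℂ 2 (((volume : Measure (Fin n → ℝ)).restrict E).prod
        (Measure.count : Measure ℤ)),
      (Φ (Dhat (Φ.symm f)) : (Fin n → ℝ) × ℤ → ℂ)
        =ᵐ[((volume : Measure (Fin n → ℝ)).restrict E).prod (Measure.count : Measure ℤ)]
          fun p => f (p.1, p.2 - 1) := by
  intro f
  have hB : Aᵀ.det ≠ 0 := by rwa [det_transpose]
  set g := Φ.symm f
  have hf := hΦ g
  rw [show Φ g = f from Φ.apply_symm_apply f] at hf
  have hDg : ∀ᵐ p ∂((volume : Measure (Fin n → ℝ)).restrict E).prod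
        (Measure.count : Measure ℤ),
      (Dhat g : (Fin n → ℝ) → ℂ) ((Aᵀ ^ p.2).mulVec p.1)
        = ((Real.sqrt |Aᵀ.det| : ℂ))⁻¹ * g ((Aᵀ ^ (p.2 - 1)).mulVec p.1) := by
    refine (ae_prod_count_iff _).2 fun k => ae_restrict_of_ae ?_
    filter_upwards [ae_eq_comp_mulVec volume (hB.isUnit.det_zpow k).ne_zero (hDhat g)]
      with x hx
    simp only [Function.comp_apply] at hx
    rw [hx, mulVec_mulVec, inv_mul_zpow hB.isUnit]
  have hf_shift : ∀ᵐ p ∂((volume : Measure (Fin n → ℝ)).restrict E).prod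
        (Measure.count : Measure ℤ),
      (f : (Fin n → ℝ) × ℤ → ℂ) (p.1, p.2 - 1)
        = ((|Aᵀ.det| ^ (((p.2 - 1 : ℤ) : ℝ) / 2) : ℝ) : ℂ)
          * g ((Aᵀ ^ (p.2 - 1)).mulVec p.1) :=
    (ae_prod_count_iff _).2 fun k => (ae_prod_count_iff _).1 hf (k - 1)
  filter_upwards [hΦ (Dhat g), hDg, hf_shift] with p hΦp hDp hfp
  rw [hΦp, hDp, hfp, ← mul_assoc, ← ofReal_inv, ← ofReal_mul,
    Real.rpow_div_two_mul_inv_sqrt (abs_pos.2 hB), Int.cast_sub, Int.cast_one]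

/-- Let `E` tile `ℝⁿ` under dilation by `B = Aᵀ`, let
`Φ : L²(ℝⁿ) → L²(E × ℤ)` be the unitary `Φ f (x, k) = |det B|^{k/2} f (B^k x)`, and
let `D̂ = ℱ D_A ℱ^{-1}` be the Fourier-conjugated dilation, i.e. the unitary with
`D̂ f (ξ) = |det B|^{-1/2} f (B^{-1} ξ)`.  Then the conjugated dilation
`D̃_A = Φ D̂ Φ^{-1}` satisfies `D̃_A f (x, k) = f (x, k - 1)` for all `f ∈ L²(E × ℤ)`. -/
theorem conjugated_dilation_is_shift {n : ℕ} (A : Matrix (Fin n) (Fin n) ℝ)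
    (hA : A.det ≠ 0) (E : Set (Fin n → ℝ)) (hE : MeasurableSet E)
    (hdisj : Pairwise fun j k : ℤ =>
      Disjoint ((fun x => (Aᵀ ^ j).mulVec x) '' E) ((fun x => (Aᵀ ^ k).mulVec x) '' E))
    (hcover : volume ((⋃ j : ℤ, (fun x => (Aᵀ ^ j).mulVec x) '' E)ᶜ) = 0)
    (Φ : Lp ℂ 2 (volume : Measure (Fin n → ℝ)) ≃ₗᵢ[ℂ]
      Lp ℂ 2 (((volume : Measure (Fin n → ℝ)).restrict E).prod (Measure.count : Measure ℤ)))
    (hΦ : ∀ f : Lp ℂ 2 (volume : Measure (Fin n → ℝ)),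
      (Φ f : (Fin n → ℝ) × ℤ → ℂ) =ᵐ[((volume : Measure (Fin n → ℝ)).restrict E).prod
          (Measure.count : Measure ℤ)]
        fun p => ((|Aᵀ.det| ^ ((p.2 : ℝ) / 2) : ℝ) : ℂ) * f ((Aᵀ ^ p.2).mulVec p.1))
    (Dhat : Lp ℂ 2 (volume : Measure (Fin n → ℝ)) ≃ₗᵢ[ℂ]
      Lp ℂ 2 (volume : Measure (Fin n → ℝ)))
    (hDhat : ∀ f : Lp ℂ 2 (volume : Measure (Fin n → ℝ)),
      (Dhat f : (Fin n → ℝ) → ℂ) =ᵐ[volume]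
        fun ξ => ((Real.sqrt |Aᵀ.det| : ℂ))⁻¹ * f ((Aᵀ)⁻¹.mulVec ξ)) :
    ∀ f : Lp ℂ 2 (((volume : Measure (Fin n → ℝ)).restrict E).prod
        (Measure.count : Measure ℤ)),
      (Φ (Dhat (Φ.symm f)) : (Fin n → ℝ) × ℤ → ℂ)
        =ᵐ[((volume : Measure (Fin n → ℝ)).restrict E).prod (Measure.count : Measure ℤ)]
          fun p => f (p.1, p.2 - 1) :=
  conjugated_dilation_is_shift_general A hA E Φ hΦ Dhat hDhat
end

section
/- Let A be an n×n integer dilation matrix (all eigenvalues of modulus > 1), B = Aᵀ, and suppose x ∈ ℝⁿ satisfies B^m x ≠ x for all nonzero m ∈ ℤ. Then the unitary representation W̃_x of ℚ_A ⋊_ϑ ℤ on ℓ²(ℤ), given by [W̃_x(β,m)g](k) = e^{-i⟨x, A^k β⟩} g(k-m), is irreducible: every bounded operator on ℓ²(ℤ) commuting with all W̃_x(β,m) is a scalar multiple of the identity. -/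
open Matrix Complex Filter Topology
open scoped ENNReal

/-!
The operators `W (β, 0)` act diagonally on the standard basis `δ_k` of `ℓ²(ℤ)`, with eigenvalues
`e^{-i⟨x, A^k β⟩}`, and `W (0, 1)` is the shift `δ_k ↦ δ_{k+1}`. Once the eigenvalue functions
separate the points of `ℤ`, an operator commuting with every `W (β, 0)` is diagonal, and commuting
with the shift forces its diagonal to be constant.

Separation: if `⟨x, (A^k - A^l) β⟩ ∈ 2πℤ` for every `β ∈ ℚ_A`, then with `β = A^{-j} e_i` every
coordinate of `y A^{-j}`, where `y = xᵀ (A^k - A^l) ≠ 0`, lies in `2πℤ`. But `A^{-j} → 0`, since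
by Gelfand's formula the spectral radius of `A⁻¹` is `< 1`; so `y A^{-j}` eventually vanishes,
forcing `y = 0`.
-/

/-- The set `ℚ_A = ⋃_{j ≥ 0} { A^{-j} v : v ∈ ℤⁿ } ⊆ ℚⁿ`. -/
noncomputable def QA {n : ℕ} (A : Matrix (Fin n) (Fin n) ℚ) : Set (Fin n → ℚ) :=
  {β | ∃ (j : ℕ) (v : Fin n → ℤ), β = (A ^ (-(j : ℤ))).mulVec fun i => (v i : ℚ)}

theorem tendsto_pow_atTop_nhds_zero_of_spectralRadius_lt_one {A : Type*} [NormedRing A]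
    [NormedAlgebra ℂ A] [CompleteSpace A] {a : A} (ha : spectralRadius ℂ a < 1) :
    Tendsto (a ^ ·) atTop (𝓝 0) := by
  obtain ⟨r, hρr, hr1⟩ := ENNReal.lt_iff_exists_nnreal_btwn.mp ha
  have hr1 : (r : ℝ) < 1 := mod_cast ENNReal.coe_lt_one_iff.mp hr1
  have hbound : ∀ᶠ j : ℕ in atTop, ‖a ^ j‖ ≤ (r : ℝ) ^ j := by
    have gelfand := spectrum.pow_norm_pow_one_div_tendsto_nhds_spectralRadius a
    filter_upwards [gelfand.eventually_lt_const hρr, eventually_gt_atTop 0] with j hj hj0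
    have hj : ‖a ^ j‖ ^ (1 / j : ℝ) < r := by
      simpa using (ENNReal.ofReal_lt_iff_lt_toReal (by positivity) ENNReal.coe_ne_top).mp hj
    calc ‖a ^ j‖ = (‖a ^ j‖ ^ (1 / j : ℝ)) ^ j := by
          rw [← Real.rpow_natCast, ← Real.rpow_mul (norm_nonneg _), one_div,
            inv_mul_cancel₀ (by positivity), Real.rpow_one]
      _ ≤ (r : ℝ) ^ j := by gcongr
  exact tendsto_zero_iff_norm_tendsto_zero.mpr <|
    squeeze_zero' (.of_forall fun _ => norm_nonneg _) hbound
      (tendsto_pow_atTop_nhds_zero_of_lt_one r.coe_nonneg hr1)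

theorem eventually_eq_zero_of_tendsto_zero_of_mem_zmultiples {α : Type*} {l : Filter α}
    {f : α → ℝ} (hf : Tendsto f l (𝓝 0)) {p : ℝ} (hp : ∀ a, f a ∈ AddSubgroup.zmultiples p) :
    ∀ᶠ a in l, f a = 0 := by
  rcases eq_or_ne p 0 with rfl | hp0
  · exact .of_forall fun a => by simpa using hp a
  filter_upwards [Metric.tendsto_nhds.mp hf |p| (abs_pos.mpr hp0)] with a ha
  obtain ⟨t, ht⟩ := AddSubgroup.mem_zmultiples_iff.mp (hp a)
  rw [← ht, Real.dist_eq, sub_zero, zsmul_eq_mul, abs_mul] at ha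
  have ht0 : |t| < 1 := by
    have : |(t : ℝ)| < 1 := by nlinarith [abs_pos.mpr hp0]
    exact_mod_cast this
  rw [← ht, Int.abs_lt_one_iff.mp ht0, zero_zsmul]

theorem Complex.sub_mem_zmultiples_of_exp_neg_I_mul_eq {a b : ℝ}
    (h : exp (-I * a) = exp (-I * b)) : a - b ∈ AddSubgroup.zmultiples (2 * Real.pi) := by
  obtain ⟨t, ht⟩ := exp_eq_exp_iff_exists_int.mp h
  refine ⟨-t, ofReal_injective ?_⟩
  push_cast
  linear_combination -I * ht - (a - b + 2 * Real.pi * t) * I_sq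

section MatrixPowers

variable {ι : Type*} [Fintype ι] [DecidableEq ι]

theorem Matrix.map_nonsing_inv {K L : Type*} [Field K] [Field L] (f : K →+* L)
    (M : Matrix ι ι K) : M⁻¹.map f = (M.map f)⁻¹ := by
  rw [Matrix.inv_def, Matrix.inv_def, ← RingHom.mapMatrix_apply, ← RingHom.mapMatrix_apply,
    ← f.map_adjugate, ← f.map_det, Ring.inverse_eq_inv', Ring.inverse_eq_inv', ← map_inv₀]
  ext i j
  simp

theorem Matrix.map_zpow {K L : Type*} [Field K] [Field L] (f : K →+* L) (M : Matrix ι ι K) :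
    ∀ z : ℤ, (M ^ z).map f = M.map f ^ z
  | (n : ℕ) => by simpa using map_pow f.mapMatrix M n
  | .negSucc n => by
    rw [zpow_negSucc, zpow_negSucc, Matrix.map_nonsing_inv]
    simpa using congrArg Inv.inv (map_pow f.mapMatrix M (n + 1))

section
attribute [local instance] Matrix.linftyOpNormedRing Matrix.linftyOpNormedAlgebra

theorem Matrix.tendsto_pow_atTop_nhds_zero_of_forall_mem_spectrum (M : Matrix ι ι ℂ)
    (hM : ∀ μ ∈ spectrum ℂ M, ‖μ‖ < 1) : Tendsto (M ^ ·) atTop (𝓝 0) := by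
  cases subsingleton_or_nontrivial (Matrix ι ι ℂ)
  · simpa only [Subsingleton.elim _ (0 : Matrix ι ι ℂ)] using tendsto_const_nhds
  · have : CompleteSpace (Matrix ι ι ℂ) := FiniteDimensional.complete ℂ _
    refine tendsto_pow_atTop_nhds_zero_of_spectralRadius_lt_one ?_
    simpa using spectrum.spectralRadius_lt_of_forall_lt M (r := 1) fun μ hμ => mod_cast hM μ hμ

end

theorem Matrix.isUnit_of_forall_mem_spectrum_one_lt_norm {M : Matrix ι ι ℂ}
    (hM : ∀ μ ∈ spectrum ℂ M, 1 < ‖μ‖) : IsUnit M :=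
  not_not.mp fun h => (hM 0 ((spectrum.zero_mem_iff ℂ).mpr h)).not_ge (by simp)

theorem Matrix.isUnit_det_of_forall_mem_spectrum_one_lt_norm {R : Matrix ι ι ℝ}
    (hR : ∀ μ ∈ spectrum ℂ (R.map ofReal), 1 < ‖μ‖) : IsUnit R.det := by
  have hdet := (Matrix.isUnit_iff_isUnit_det _).mp (isUnit_of_forall_mem_spectrum_one_lt_norm hR)
  rw [show R.map ofReal = ofRealHom.mapMatrix R from rfl, ← RingHom.map_det] at hdet
  simpa using hdet

theorem Matrix.tendsto_zpow_neg_of_forall_mem_spectrum_one_lt_norm {R : Matrix ι ι ℝ}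
    (hR : ∀ μ ∈ spectrum ℂ (R.map ofReal), 1 < ‖μ‖) :
    Tendsto (fun j : ℕ => R ^ (-(j : ℤ))) atTop (𝓝 0) := by
  set M := R.map ofReal
  obtain ⟨u, hu⟩ := isUnit_of_forall_mem_spectrum_one_lt_norm hR
  have hinv : ∀ μ ∈ spectrum ℂ M⁻¹, ‖μ‖ < 1 := by
    intro μ hμ
    rw [← hu, ← Matrix.coe_units_inv, ← spectrum.map_inv, Set.mem_inv, hu] at hμ
    have := hR _ hμ
    rw [norm_inv, one_lt_inv_iff₀] at this
    exact this.2
  have hre : ∀ j : ℕ, R ^ (-(j : ℤ)) = (M⁻¹ ^ j).map re := by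
    intro j
    rw [inv_pow', ← zpow_neg_natCast, show M = R.map ofRealHom from rfl, ← Matrix.map_zpow,
      Matrix.map_map]
    ext
    simp
  simp_rw [hre]
  simpa [Function.comp_def] using ((continuous_id.matrix_map continuous_re).tendsto 0).comp
    (Matrix.tendsto_pow_atTop_nhds_zero_of_forall_mem_spectrum _ hinv)

theorem Matrix.exists_dotProduct_zpow_sub_notMem_zmultiples {R : Matrix ι ι ℝ}
    (hR : IsUnit R.det) (hdecay : Tendsto (fun j : ℕ => R ^ (-(j : ℤ))) atTop (𝓝 0))
    {x : ι → ℝ} (hx : ∀ m : ℤ, m ≠ 0 → (Rᵀ ^ m) *ᵥ x ≠ x) {k l : ℤ} (hkl : k ≠ l) (p : ℝ) :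
    ∃ (j : ℕ) (v : ι → ℤ),
      x ⬝ᵥ (R ^ k *ᵥ (R ^ (-(j : ℤ)) *ᵥ fun i => (v i : ℝ))) -
        x ⬝ᵥ (R ^ l *ᵥ (R ^ (-(j : ℤ)) *ᵥ fun i => (v i : ℝ))) ∉ AddSubgroup.zmultiples p := by
  set y := x ᵥ* (R ^ k - R ^ l)
  have hy : y ≠ 0 := by
    intro hy
    refine hx (k - l) (sub_ne_zero.mpr hkl) ?_
    replace hy : x ᵥ* R ^ k = x ᵥ* R ^ l := sub_eq_zero.mp (by rw [← vecMul_sub]; exact hy)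
    rw [← transpose_zpow, mulVec_transpose, sub_eq_add_neg, zpow_add hR, ← vecMul_vecMul, hy,
      vecMul_vecMul, ← zpow_add hR, add_neg_cancel, zpow_zero, vecMul_one]
  have hcoord : ∀ (j : ℕ) (i : ι), (y ᵥ* R ^ (-(j : ℤ))) i =
      x ⬝ᵥ (R ^ k *ᵥ (R ^ (-(j : ℤ)) *ᵥ fun i' => ((Pi.single i 1 : ι → ℤ) i' : ℝ))) -
        x ⬝ᵥ (R ^ l *ᵥ (R ^ (-(j : ℤ)) *ᵥ fun i' => ((Pi.single i 1 : ι → ℤ) i' : ℝ))) := by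
    intro j i
    have he : (fun i' => ((Pi.single i 1 : ι → ℤ) i' : ℝ)) = Pi.single i 1 := by
      ext i'; by_cases h : i' = i <;> simp [h]
    rw [he, ← dotProduct_sub, ← sub_mulVec, dotProduct_mulVec, dotProduct_mulVec,
      dotProduct_single, mul_one]
  by_contra! h
  have hzero : ∀ᶠ j : ℕ in atTop, y ᵥ* R ^ (-(j : ℤ)) = 0 := by
    have hy0 : Tendsto (fun j : ℕ => y ᵥ* R ^ (-(j : ℤ))) atTop (𝓝 0) := by
      simpa [Function.comp_def] using
        ((continuous_const.matrix_vecMul continuous_id).tendsto 0).comp hdecay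
    simp only [funext_iff, Pi.zero_apply]
    refine eventually_all.mpr fun i => eventually_eq_zero_of_tendsto_zero_of_mem_zmultiples
      (p := p) (tendsto_pi_nhds.mp hy0 i) fun j => ?_
    rw [hcoord]
    exact h j _
  obtain ⟨j, hj⟩ := hzero.exists
  refine hy ?_
  rw [← vecMul_one y, ← zpow_neg_mul_zpow_self j hR, ← vecMul_vecMul, hj, zero_vecMul]

end MatrixPowers

namespace lp

variable {ι 𝕜 : Type*} [NormedField 𝕜] {p : ℝ≥0∞} [DecidableEq ι]

theorem eq_smul_single_of_apply_eq_zero {g : lp (fun _ : ι => 𝕜) p} {k : ι}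
    (hg : ∀ l ≠ k, g l = 0) : g = g k • lp.single p k 1 := by
  ext l
  by_cases hl : l = k
  · subst hl; simp
  · simp [hl, hg l hl]

theorem continuousLinearMap_ext_single [Fact (1 ≤ p)] (hp : p ≠ ∞) {F : Type*}
    [NormedAddCommGroup F] [NormedSpace 𝕜 F] {S T : lp (fun _ : ι => 𝕜) p →L[𝕜] F}
    (h : ∀ i, S (lp.single p i 1) = T (lp.single p i 1)) : S = T := by
  ext g
  have hsingle : ∀ i, lp.single p i (g i) = g i • lp.single (E := fun _ : ι => 𝕜) p i 1 :=
    fun i => by rw [← lp.single_smul (E := fun _ : ι => 𝕜), smul_eq_mul, mul_one]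
  have hT := (lp.hasSum_single hp g).mapL T
  simp only [hsingle, map_smul, ← h] at hT
  exact ((lp.hasSum_single hp g).mapL S).unique (by simpa only [hsingle, map_smul] using hT)

theorem single_one_apply_eq_zero_of_commute_mul [Fact (1 ≤ p)]
    {S : lp (fun _ : ι => 𝕜) p →L[𝕜] lp (fun _ : ι => 𝕜) p}
    {U : lp (fun _ : ι => 𝕜) p → lp (fun _ : ι => 𝕜) p} {u : ι → 𝕜}
    (hU : ∀ g l, U g l = u l * g l) (hSU : ∀ g, S (U g) = U (S g)) {k l : ι} (hkl : u k ≠ u l) :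
    S (lp.single p k 1) l = 0 := by
  have hUk : U (lp.single p k 1) = u k • lp.single p k 1 := by
    rw [eq_smul_single_of_apply_eq_zero (g := U (lp.single p k 1)) (k := k) fun l hl => by
      simp [hU, hl]]
    simp [hU]
  have h := congrArg (· l) (hSU (lp.single p k 1))
  simp only [hUk, map_smul, hU, lp.coeFn_smul, Pi.smul_apply, smul_eq_mul] at h
  exact (mul_eq_mul_right_iff.mp h).resolve_left hkl

theorem single_one_apply_eq_of_commute_shift [Fact (1 ≤ p)]
    {S : lp (fun _ : ℤ => 𝕜) p →L[𝕜] lp (fun _ : ℤ => 𝕜) p}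
    {V : lp (fun _ : ℤ => 𝕜) p → lp (fun _ : ℤ => 𝕜) p}
    (hV : ∀ g l, V g l = g (l - 1)) (hSV : ∀ g, S (V g) = V (S g)) (k : ℤ) :
    S (lp.single p (k + 1) 1) (k + 1) = S (lp.single p k 1) k := by
  have hVk : V (lp.single p k 1) = lp.single p (k + 1) 1 := by
    ext l
    simp [hV, Pi.single_apply, sub_eq_iff_eq_add]
  rw [← hVk, hSV, hV, add_sub_cancel_right]

theorem exists_eq_smul_id_of_commute_mul_of_commute_shift [Fact (1 ≤ p)] (hp : p ≠ ∞)
    {S : lp (fun _ : ℤ => 𝕜) p →L[𝕜] lp (fun _ : ℤ => 𝕜) p} {κ : Type*}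
    {U : κ → lp (fun _ : ℤ => 𝕜) p → lp (fun _ : ℤ => 𝕜) p} {u : κ → ℤ → 𝕜}
    (hU : ∀ i g l, U i g l = u i l * g l) (hSU : ∀ i g, S (U i g) = U i (S g))
    (hsep : ∀ k l, k ≠ l → ∃ i, u i k ≠ u i l)
    {V : lp (fun _ : ℤ => 𝕜) p → lp (fun _ : ℤ => 𝕜) p}
    (hV : ∀ g l, V g l = g (l - 1)) (hSV : ∀ g, S (V g) = V (S g)) :
    ∃ c : 𝕜, S = c • ContinuousLinearMap.id 𝕜 _ := by
  set c : ℤ → 𝕜 := fun k => S (lp.single p k 1) k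
  have hdiag : ∀ k, S (lp.single p k 1) = c k • lp.single p k 1 := fun k =>
    eq_smul_single_of_apply_eq_zero fun l hl => by
      obtain ⟨i, hi⟩ := hsep k l hl.symm
      exact single_one_apply_eq_zero_of_commute_mul (hU i) (hSU i) hi
  have hc : ∀ k, c k = c 0 := fun k => by
    simpa using Function.Periodic.int_mul_eq (c := 1)
      (fun k => single_one_apply_eq_of_commute_shift hV hSV k) k
  exact ⟨c 0, continuousLinearMap_ext_single hp fun k => by simp [hdiag, hc k]⟩

end lp

theorem exists_mem_QA_exp_ne {n : ℕ} (A : Matrix (Fin n) (Fin n) ℤ)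
    (hA : ∀ μ : ℂ, ((A.map ((↑) : ℤ → ℂ)).charpoly).IsRoot μ → 1 < ‖μ‖)
    {x : Fin n → ℝ} (hx : ∀ m : ℤ, m ≠ 0 → ((A.map ((↑) : ℤ → ℝ))ᵀ ^ m).mulVec x ≠ x)
    {k l : ℤ} (hkl : k ≠ l) :
    ∃ β ∈ QA (A.map ((↑) : ℤ → ℚ)),
      exp (-I * ↑(x ⬝ᵥ (A.map ((↑) : ℤ → ℝ) ^ k *ᵥ fun i => (β i : ℝ)))) ≠
        exp (-I * ↑(x ⬝ᵥ (A.map ((↑) : ℤ → ℝ) ^ l *ᵥ fun i => (β i : ℝ)))) := by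
  set R := A.map ((↑) : ℤ → ℝ)
  have hR : ∀ μ ∈ spectrum ℂ (R.map ofReal), 1 < ‖μ‖ := by
    intro μ hμ
    refine hA μ (Matrix.mem_spectrum_iff_isRoot_charpoly.mp ?_)
    simpa [R, Matrix.map_map, Function.comp_def] using hμ
  obtain ⟨j, v, hjv⟩ := Matrix.exists_dotProduct_zpow_sub_notMem_zmultiples
    (isUnit_det_of_forall_mem_spectrum_one_lt_norm hR)
    (tendsto_zpow_neg_of_forall_mem_spectrum_one_lt_norm hR) hx hkl (2 * Real.pi)
  have hcast : (fun i => (((A.map ((↑) : ℤ → ℚ) ^ (-(j : ℤ))) *ᵥ fun i => (v i : ℚ)) i : ℝ)) =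
      R ^ (-(j : ℤ)) *ᵥ fun i => (v i : ℝ) := by
    ext i
    have h := RingHom.map_mulVec (Rat.castHom ℝ) (A.map ((↑) : ℤ → ℚ) ^ (-(j : ℤ)))
      (fun i => (v i : ℚ)) i
    rw [Matrix.map_zpow, Matrix.map_map] at h
    simpa [R, Function.comp_def] using h
  exact ⟨_, ⟨j, v, rfl⟩, fun h => hjv (by
    simpa only [hcast] using Complex.sub_mem_zmultiples_of_exp_neg_I_mul_eq h)⟩

/-- Let `A` be an `n × n` integer dilation matrix (all eigenvalues of
modulus `> 1`), `B = Aᵀ`, and suppose `x ∈ ℝⁿ` satisfies `B^m x ≠ x` for all nonzero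
`m ∈ ℤ`.  Then the unitary representation `W̃_x` of `ℚ_A ⋊_ϑ ℤ` on `ℓ²(ℤ)` given by
`[W̃_x (β, m) g] (k) = e^{-i⟨x, A^k β⟩} g (k - m)` is irreducible: every bounded
operator on `ℓ²(ℤ)` commuting with all `W̃_x (β, m)` is a scalar multiple of the
identity. -/
theorem wavelet_rep_fiber_irreducible {n : ℕ} (A : Matrix (Fin n) (Fin n) ℤ)
    (hA : ∀ μ : ℂ, ((A.map ((↑) : ℤ → ℂ)).charpoly).IsRoot μ → 1 < ‖μ‖)
    (x : Fin n → ℝ)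
    (hx : ∀ m : ℤ, m ≠ 0 → ((A.map ((↑) : ℤ → ℝ))ᵀ ^ m).mulVec x ≠ x)
    (W : (Fin n → ℚ) → ℤ → (lp (fun _ : ℤ => ℂ) 2 ≃ₗᵢ[ℂ] lp (fun _ : ℤ => ℂ) 2))
    (hW : ∀ β : Fin n → ℚ, β ∈ QA (A.map ((↑) : ℤ → ℚ)) → ∀ m : ℤ,
      ∀ g : lp (fun _ : ℤ => ℂ) 2, ∀ k : ℤ,
        (W β m g) k =
          Complex.exp (-Complex.I *
            (∑ i, x i * (((A.map ((↑) : ℤ → ℝ)) ^ k).mulVec fun i => (β i : ℝ)) i : ℝ)) *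
            g (k - m))
    (S : lp (fun _ : ℤ => ℂ) 2 →L[ℂ] lp (fun _ : ℤ => ℂ) 2)
    (hS : ∀ β : Fin n → ℚ, β ∈ QA (A.map ((↑) : ℤ → ℚ)) → ∀ m : ℤ,
      ∀ g : lp (fun _ : ℤ => ℂ) 2, S (W β m g) = W β m (S g)) :
    ∃ c : ℂ, S = c • (ContinuousLinearMap.id ℂ (lp (fun _ : ℤ => ℂ) 2)) := by
  have h0 : (0 : Fin n → ℚ) ∈ QA (A.map ((↑) : ℤ → ℚ)) := ⟨0, 0, by ext; simp⟩
  refine lp.exists_eq_smul_id_of_commute_mul_of_commute_shift (by norm_num)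
    (U := fun β : QA (A.map ((↑) : ℤ → ℚ)) => W β 0)
    (u := fun β l => exp (-I * ↑(x ⬝ᵥ (A.map ((↑) : ℤ → ℝ) ^ l *ᵥ fun i => (β.1 i : ℝ)))))
    (fun β g l => by rw [hW β β.2 0 g l, sub_zero]; rfl) (fun β => hS β β.2 0)
    (fun k l hkl => ?_)
    (V := W 0 1) (fun g l => by simp [hW 0 h0 1 g l, ← Pi.zero_def]) (hS 0 h0 1)
  obtain ⟨β, hβ, hne⟩ := exists_mem_QA_exp_ne A hA hx hkl
  exact ⟨⟨β, hβ⟩, hne⟩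
end
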